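/- For any E ∈ Σ and n ∈ ℕ, Q*_ω(σ^{-n}(E)) = Φ^{(n)†}_ω(Q*_{θⁿ(ω)}(E)) ℙ-a.s., where Φ^{(n)}_ω = φ_{θⁿ(ω)} ∘ ⋯ ∘ φ_{θ(ω)}; consequently ℚ_{ϑ;ω}(σ^{-n}(E)) = ⟨Φ^{(n)}_ω(ϑ_ω), Q*_{θⁿ(ω)}(E)⟩ for any random state ϑ. -/

import Mathlib

open MeasureTheory Matrix Filter
open scoped ComplexOrder ENNReal

/-- Cylinder set of sequences whose first n coordinates equal a given word. -/
def cyl {𝒜 : Type*} (n : ℕ) (w : Fin n → 𝒜) : Set (ℕ → 𝒜) :=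
  {x | ∀ i : Fin n, x i = w i}

/-- V_{n;ω}(a_1,…,a_n) = v_{a_n; θⁿ(ω)} ⋯ v_{a_1; θ(ω)}. -/
noncomputable def Vq {Ω 𝒜 : Type*} {d : ℕ} (v : Ω → 𝒜 → Matrix (Fin d) (Fin d) ℂ)
    (θ : Ω → Ω) (ω : Ω) : (n : ℕ) → (Fin n → 𝒜) → Matrix (Fin d) (Fin d) ℂ
  | 0, _ => 1
  | n + 1, w => v (θ^[n + 1] ω) (w (Fin.last n)) * Vq v θ ω n (fun i => w i.castSucc)

/-- The left shift σ on 𝒜^ℕ. -/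
def shiftSeq {𝒜 : Type*} (x : ℕ → 𝒜) : ℕ → 𝒜 := fun k => x (k + 1)

/-- The skew shift τ(ω, ā) = (θ(ω), σ(ā)). -/
def tau {Ω 𝒜 : Type*} (θ : Ω → Ω) : Ω × (ℕ → 𝒜) → Ω × (ℕ → 𝒜) :=
  fun p => (θ p.1, shiftSeq p.2)

/-- The annealed quantum measure ℚ̄(Γ) = ∫_Ω ℚ_ω(Γ^ω) dℙ(ω). -/
noncomputable def annealed {Ω 𝒜 : Type*} [MeasurableSpace Ω] [MeasurableSpace 𝒜] (μ : Measure Ω)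
    (Q : Ω → Measure (ℕ → 𝒜)) (Γ : Set (Ω × (ℕ → 𝒜))) : ℝ≥0∞ :=
  ∫⁻ ω, Q ω {x | (ω, x) ∈ Γ} ∂μ

/-- T†_{a_1;θ(ω)} ∘ ⋯ ∘ T†_{a_n;θⁿ(ω)} applied to L, where T†_{a;ω}(L) = v_{a;ω}† L v_{a;ω}. -/
noncomputable def Tdagq {Ω 𝒜 : Type*} {d : ℕ} (v : Ω → 𝒜 → Matrix (Fin d) (Fin d) ℂ)
    (θ : Ω → Ω) : Ω → (n : ℕ) → (Fin n → 𝒜) →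
      Matrix (Fin d) (Fin d) ℂ → Matrix (Fin d) (Fin d) ℂ
  | _, 0, _, L => L
  | ω, n + 1, w, L =>
      (v (θ ω) (w 0))ᴴ * Tdagq v θ (θ ω) n (fun i => w i.succ) L * v (θ ω) (w 0)

/-- Φ^{(n)}_ω = φ_{θⁿ(ω)} ∘ ⋯ ∘ φ_{θ(ω)}. -/
noncomputable def Phiq {Ω 𝒜 : Type*} {d : ℕ} [Fintype 𝒜]
    (v : Ω → 𝒜 → Matrix (Fin d) (Fin d) ℂ) (θ : Ω → Ω) (ω : Ω) :
    ℕ → Matrix (Fin d) (Fin d) ℂ → Matrix (Fin d) (Fin d) ℂ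
  | 0, M => M
  | n + 1, M => ∑ a, v (θ^[n + 1] ω) a * Phiq v θ ω n M * (v (θ^[n + 1] ω) a)ᴴ

/-- The Hilbert–Schmidt adjoint Φ^{(n)†}_ω = φ†_{θ(ω)} ∘ ⋯ ∘ φ†_{θⁿ(ω)}. -/
noncomputable def Phidagq {Ω 𝒜 : Type*} {d : ℕ} [Fintype 𝒜]
    (v : Ω → 𝒜 → Matrix (Fin d) (Fin d) ℂ) (θ : Ω → Ω) :
    Ω → ℕ → Matrix (Fin d) (Fin d) ℂ → Matrix (Fin d) (Fin d) ℂ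
  | _, 0, L => L
  | ω, n + 1, L => ∑ a, (v (θ ω) a)ᴴ * Phidagq v θ (θ ω) n L * v (θ ω) a


/-!
For almost every `ω`, the set functions `E ↦ Q*_ω(σ⁻¹E)` and `E ↦ φ†_{θ(ω)}(Q*_{θ(ω)}(E))` are
matrix-valued vector measures which, by the cocycle recursion
`T†_{(a,w);ω} = v_{a;θ(ω)}† T†_{w;θ(ω)}(·) v_{a;θ(ω)}`, agree on cylinders. Cylinders are pairwise
nested or disjoint, so they form a π-system generating the product σ-algebra, and the two vector
measures coincide. Since `θ` preserves `ℙ`-null sets, the one-step identity can be iterated along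
the orbit of `ω`, giving the `n`-step one. The statement for `ℚ_{ϑ;ω}` is then Hilbert–Schmidt
duality `⟨ϑ, Φ^{(n)†}(L)⟩ = ⟨Φ^{(n)}(ϑ), L⟩`.
-/

open Set

section Kraus

variable {ι n α : Type*} [Fintype ι] [Fintype n]

-- `krausMap (v ω) = φ_ω` and `krausAdjoint (v ω) = φ†_ω`.
def krausMap [NonUnitalNonAssocSemiring α] [Star α] (V : ι → Matrix n n α)
    (M : Matrix n n α) : Matrix n n α :=
  ∑ a, V a * M * (V a)ᴴ

def krausAdjoint [NonUnitalNonAssocSemiring α] [Star α] (V : ι → Matrix n n α) :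
    Matrix n n α →+ Matrix n n α where
  toFun L := ∑ a, (V a)ᴴ * L * V a
  map_zero' := by simp
  map_add' L L' := by simp only [mul_add, add_mul, Finset.sum_add_distrib]

@[simp]
theorem krausAdjoint_apply [NonUnitalNonAssocSemiring α] [Star α] (V : ι → Matrix n n α)
    (L : Matrix n n α) : krausAdjoint V L = ∑ a, (V a)ᴴ * L * V a :=
  rfl

theorem continuous_krausAdjoint [NonUnitalNonAssocSemiring α] [Star α] [TopologicalSpace α]
    [IsTopologicalSemiring α] (V : ι → Matrix n n α) : Continuous (krausAdjoint V) :=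
  continuous_finsetSum _ fun _ _ => (continuous_const.mul continuous_id).mul continuous_const

theorem trace_conjTranspose_mul_krausAdjoint [CommSemiring α] [StarRing α]
    (V : ι → Matrix n n α) (A L : Matrix n n α) :
    (Aᴴ * krausAdjoint V L).trace = ((krausMap V A)ᴴ * L).trace := by
  simp only [krausAdjoint_apply, krausMap, Matrix.mul_sum, Matrix.sum_mul, Matrix.trace_sum,
    Matrix.conjTranspose_sum, Matrix.conjTranspose_mul, Matrix.conjTranspose_conjTranspose]
  refine Finset.sum_congr rfl fun a _ => ?_
  rw [← mul_assoc, ← mul_assoc, Matrix.trace_mul_comm, mul_assoc, mul_assoc, mul_assoc]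

end Kraus

section Cocycles

variable {Ω 𝒜 : Type*} {d : ℕ} (v : Ω → 𝒜 → Matrix (Fin d) (Fin d) ℂ) (θ : Ω → Ω)

theorem Tdagq_succ_cons (ω : Ω) (N : ℕ) (a : 𝒜) (w : Fin N → 𝒜) (L : Matrix (Fin d) (Fin d) ℂ) :
    Tdagq v θ ω (N + 1) (Fin.cons a w) L
      = (v (θ ω) a)ᴴ * Tdagq v θ (θ ω) N w L * v (θ ω) a := by
  simp only [Tdagq, Fin.cons_zero, Fin.cons_succ]

variable [Fintype 𝒜]

theorem Phidagq_succ (ω : Ω) (n : ℕ) (L : Matrix (Fin d) (Fin d) ℂ) :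
    Phidagq v θ ω (n + 1) L = krausAdjoint (v (θ ω)) (Phidagq v θ (θ ω) n L) :=
  rfl

theorem Phiq_succ (n : ℕ) (ω : Ω) (M : Matrix (Fin d) (Fin d) ℂ) :
    Phiq v θ ω (n + 1) M = Phiq v θ (θ ω) n (krausMap (v (θ ω)) M) := by
  induction n with
  | zero => rfl
  | succ n ih =>
    rw [Phiq, ih]
    rfl

theorem trace_conjTranspose_mul_Phidagq (n : ℕ) (ω : Ω) (A L : Matrix (Fin d) (Fin d) ℂ) :
    (Aᴴ * Phidagq v θ ω n L).trace = ((Phiq v θ ω n A)ᴴ * L).trace := by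
  induction n generalizing ω A with
  | zero => rfl
  | succ n ih => rw [Phidagq_succ, trace_conjTranspose_mul_krausAdjoint, ih, Phiq_succ]

end Cocycles

section Cylinders

variable {𝒜 : Type*}

variable (𝒜) in
def cylinders : Set (Set (ℕ → 𝒜)) :=
  ⋃ N, range (cyl N)

theorem cyl_mem_cylinders (N : ℕ) (w : Fin N → 𝒜) : cyl N w ∈ cylinders 𝒜 :=
  mem_iUnion.2 ⟨N, w, rfl⟩

theorem cyl_zero (w : Fin 0 → 𝒜) : cyl 0 w = univ :=
  eq_univ_of_forall fun _ i => i.elim0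

theorem pairwise_disjoint_cyl (N : ℕ) : Pairwise (Function.onFun Disjoint (cyl (𝒜 := 𝒜) N)) := by
  refine fun w w' hne => disjoint_left.2 fun x hx hx' => hne (funext fun i => ?_)
  rw [← hx i, ← hx' i]

theorem cyl_subset_cyl {N M : ℕ} (hNM : N ≤ M) {w : Fin N → 𝒜} {w' : Fin M → 𝒜}
    {x : ℕ → 𝒜} (hx : x ∈ cyl N w) (hx' : x ∈ cyl M w') : cyl M w' ⊆ cyl N w :=
  fun y hy i => by
    rw [← hx i, show (i : ℕ) = (Fin.castLE hNM i : ℕ) from rfl, hy, ← hx']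

theorem isPiSystem_cylinders : IsPiSystem (cylinders 𝒜) := by
  rintro _ hs _ ht ⟨x, hxs, hxt⟩
  obtain ⟨N, w, rfl⟩ := mem_iUnion.1 hs
  obtain ⟨M, w', rfl⟩ := mem_iUnion.1 ht
  rcases le_total N M with hNM | hMN
  · rw [inter_eq_right.2 (cyl_subset_cyl hNM hxs hxt)]
    exact cyl_mem_cylinders M w'
  · rw [inter_eq_left.2 (cyl_subset_cyl hMN hxt hxs)]
    exact cyl_mem_cylinders N w

theorem preimage_restrict_eq_biUnion_cyl (N : ℕ) (S : Set (Fin N → 𝒜)) :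
    (fun (x : ℕ → 𝒜) (i : Fin N) => x i) ⁻¹' S = ⋃ w ∈ S, cyl N w := by
  ext x
  simp only [mem_preimage, mem_iUnion, exists_prop]
  exact ⟨fun hx => ⟨_, hx, fun _ => rfl⟩, fun ⟨w, hw, hxw⟩ => funext hxw ▸ hw⟩

theorem preimage_shiftSeq_cyl (N : ℕ) (w : Fin N → 𝒜) :
    shiftSeq ⁻¹' cyl N w = ⋃ a, cyl (N + 1) (Fin.cons a w) := by
  ext x
  simp only [mem_preimage, mem_iUnion, cyl, mem_ofPred_eq, shiftSeq]
  constructor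
  · exact fun hx => ⟨x 0, Fin.cases rfl fun i => by simpa using hx i⟩
  · exact fun ⟨a, hx⟩ i => by simpa using hx i.succ

variable [MeasurableSpace 𝒜]

theorem measurable_shift_add (n : ℕ) : Measurable fun (x : ℕ → 𝒜) (k : ℕ) => x (k + n) :=
  measurable_pi_lambda _ fun k => measurable_pi_apply (k + n)

theorem measurableSet_cyl [MeasurableSingletonClass 𝒜] (N : ℕ) (w : Fin N → 𝒜) :
    MeasurableSet (cyl N w) := by
  have : cyl N w = ⋂ i : Fin N, (fun x : ℕ → 𝒜 => x i) ⁻¹' {w i} := by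
    ext x
    simp [cyl]
  rw [this]
  exact .iInter fun i => measurable_pi_apply (i : ℕ) (measurableSet_singleton _)

theorem pi_eq_generateFrom_cylinders [Finite 𝒜] [MeasurableSingletonClass 𝒜] :
    MeasurableSpace.pi = MeasurableSpace.generateFrom (cylinders 𝒜) := by
  refine le_antisymm ?_ (MeasurableSpace.generateFrom_le ?_)
  · rw [MeasurableSpace.pi_eq_generateFrom_projections]
    refine MeasurableSpace.generateFrom_le ?_
    rintro _ ⟨i, A, -, rfl⟩
    have : Function.eval i ⁻¹' A
        = (fun (x : ℕ → 𝒜) (j : Fin (i + 1)) => x j) ⁻¹' {w | w (Fin.last i) ∈ A} := rfl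
    rw [this, preimage_restrict_eq_biUnion_cyl]
    exact .biUnion (to_countable _) fun w _ =>
      MeasurableSpace.measurableSet_generateFrom (cyl_mem_cylinders _ w)
  · rintro _ hs
    obtain ⟨N, w, rfl⟩ := mem_iUnion.1 hs
    exact measurableSet_cyl N w

end Cylinders

namespace MeasureTheory.VectorMeasure

section

variable {X M : Type*} [MeasurableSpace X] [AddCommGroup M] [TopologicalSpace M]
  [IsTopologicalAddGroup M] [T2Space M]

open Classical in
noncomputable def ofHasSum (F : Set X → M)
    (hF : ∀ f : ℕ → Set X, (∀ k, MeasurableSet (f k)) → Pairwise (Function.onFun Disjoint f) →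
      HasSum (fun k => F (f k)) (F (⋃ k, f k))) :
    VectorMeasure X M where
  measureOf' s := if MeasurableSet s then F s else 0
  empty' := by
    have h := hF (fun _ => ∅) (fun _ => .empty) fun _ _ _ => disjoint_bot_left
    rw [iUnion_empty] at h
    rw [if_pos .empty]
    exact tendsto_nhds_unique tendsto_const_nhds h.summable.tendsto_atTop_zero
  not_measurable' _ hs := if_neg hs
  m_iUnion' f hf hd := by
    simpa only [if_pos (hf _), if_pos (MeasurableSet.iUnion hf)] using hF f hf hd

theorem ofHasSum_apply {F : Set X → M}
    (hF : ∀ f : ℕ → Set X, (∀ k, MeasurableSet (f k)) → Pairwise (Function.onFun Disjoint f) →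
      HasSum (fun k => F (f k)) (F (⋃ k, f k)))
    {s : Set X} (hs : MeasurableSet s) : ofHasSum F hF s = F s :=
  if_pos hs

end

section ShiftRelation

variable {𝒜 : Type*} [Fintype 𝒜] [MeasurableSpace 𝒜] [MeasurableSingletonClass 𝒜]
  {n α : Type*} [Fintype n] [NonUnitalNonAssocRing α] [Star α] [TopologicalSpace α]
  [IsTopologicalRing α] [T2Space α]

theorem map_shiftSeq_eq_mapRange_krausAdjoint
    {μ ν : VectorMeasure (ℕ → 𝒜) (Matrix n n α)} {V : 𝒜 → Matrix n n α}
    (h : ∀ N (a : 𝒜) (w : Fin N → 𝒜),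
      μ (cyl (N + 1) (Fin.cons a w)) = (V a)ᴴ * ν (cyl N w) * V a) :
    μ.map shiftSeq = ν.mapRange (krausAdjoint V) (continuous_krausAdjoint V) := by
  have hcyl (N : ℕ) (w : Fin N → 𝒜) :
      μ.map shiftSeq (cyl N w)
        = ν.mapRange (krausAdjoint V) (continuous_krausAdjoint V) (cyl N w) := by
    rw [map_apply (f := shiftSeq) _ (measurable_shift_add 1) (measurableSet_cyl N w),
      mapRange_apply, preimage_shiftSeq_cyl,
      of_disjoint_iUnion (fun a => measurableSet_cyl (N + 1) (Fin.cons a w))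
        ((pairwise_disjoint_cyl (N + 1)).comp_of_injective
          (Fin.cons_left_injective (α := fun _ => 𝒜) w)),
      tsum_fintype, krausAdjoint_apply]
    simp only [h]
  refine ext_of_generateFrom _ ?_ pi_eq_generateFrom_cylinders isPiSystem_cylinders ?_
  · rintro _ hs
    obtain ⟨N, w, rfl⟩ := mem_iUnion.1 hs
    exact hcyl N w
  · simpa only [cyl_zero] using hcyl 0 Fin.elim0

end ShiftRelation

end MeasureTheory.VectorMeasure

section Quenched

open MeasureTheory

variable {Ω 𝒜 : Type*} {d : ℕ} [Fintype 𝒜] [MeasurableSpace 𝒜] [MeasurableSingletonClass 𝒜]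
  [MeasurableSpace Ω] {μ : Measure Ω} {θ : Ω → Ω} {v : Ω → 𝒜 → Matrix (Fin d) (Fin d) ℂ}
  {Q : Ω → VectorMeasure (ℕ → 𝒜) (Matrix (Fin d) (Fin d) ℂ)}

theorem ae_map_shiftSeq_eq_mapRange_krausAdjoint (hθ : Measure.QuasiMeasurePreserving θ μ μ)
    (hQ : ∀ᵐ ω ∂μ, ∀ N w, Q ω (cyl N w) = Tdagq v θ ω N w 1) :
    ∀ᵐ ω ∂μ, (Q ω).map shiftSeq
      = (Q (θ ω)).mapRange (krausAdjoint (v (θ ω))) (continuous_krausAdjoint _) := by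
  filter_upwards [hQ, hθ.ae hQ] with ω hω hθω
  refine VectorMeasure.map_shiftSeq_eq_mapRange_krausAdjoint fun N a w => ?_
  rw [hω, hθω, Tdagq_succ_cons]

theorem ae_apply_preimage_shift_add (hθ : Measure.QuasiMeasurePreserving θ μ μ)
    (hQ : ∀ᵐ ω ∂μ, ∀ N w, Q ω (cyl N w) = Tdagq v θ ω N w 1) (n : ℕ) :
    ∀ᵐ ω ∂μ, ∀ E, MeasurableSet E →
      Q ω ((fun x (k : ℕ) => x (k + n)) ⁻¹' E) = Phidagq v θ ω n (Q (θ^[n] ω) E) := by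
  induction n with
  | zero => exact ae_of_all _ fun ω E _ => rfl
  | succ n ih =>
    filter_upwards [ae_map_shiftSeq_eq_mapRange_krausAdjoint hθ hQ, hθ.ae ih]
      with ω hω hθω E hE
    calc Q ω ((fun x (k : ℕ) => x (k + (n + 1))) ⁻¹' E)
        = (Q ω).map shiftSeq ((fun x (k : ℕ) => x (k + n)) ⁻¹' E) :=
          (VectorMeasure.map_apply _ (measurable_shift_add 1) (measurable_shift_add n hE)).symm
      _ = krausAdjoint (v (θ ω)) (Q (θ ω) ((fun x (k : ℕ) => x (k + n)) ⁻¹' E)) := by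
          rw [hω, VectorMeasure.mapRange_apply]
      _ = Phidagq v θ ω (n + 1) (Q (θ^[n + 1] ω) E) := by
          rw [hθω E hE, Phidagq_succ, Function.iterate_succ_apply]

end Quenched

theorem stmt19_general {Ω 𝒜 : Type*} {d : ℕ} [Fintype 𝒜] [MeasurableSpace 𝒜]
    [MeasurableSingletonClass 𝒜]
    [MeasurableSpace Ω] (μ : Measure Ω)
    (θ : Ω → Ω) (hθ : Ergodic θ μ)
    (v : Ω → 𝒜 → Matrix (Fin d) (Fin d) ℂ)
    -- the matrix-valued quenched quantum measure Q*
    (Qstar : Ω → Set (ℕ → 𝒜) → Matrix (Fin d) (Fin d) ℂ)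
    (hQscyl : ∀ n (w : Fin n → 𝒜), ∀ᵐ ω ∂μ, Qstar ω (cyl n w) = Tdagq v θ ω n w 1)
    (hQsadd : ∀ ω (f : ℕ → Set (ℕ → 𝒜)), (∀ k, MeasurableSet (f k)) →
      Pairwise (Function.onFun Disjoint f) →
      ∀ i j, HasSum (fun k => Qstar ω (f k) i j) (Qstar ω (⋃ k, f k) i j)) :
    ∀ E : Set (ℕ → 𝒜), MeasurableSet E → ∀ n : ℕ,
      (∀ᵐ ω ∂μ,
        Qstar ω ((fun x (k : ℕ) => x (k + n)) ⁻¹' E)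
          = Phidagq v θ ω n (Qstar (θ^[n] ω) E)) ∧
      (∀ (ϑ : Ω → Matrix (Fin d) (Fin d) ℂ),
        (∀ i j, Measurable fun ω => ϑ ω i j) →
        (∀ᵐ ω ∂μ, (ϑ ω).PosSemidef ∧ (ϑ ω).trace = 1) →
        ∀ (Qϑ : Ω → Measure (ℕ → 𝒜)),
          (∀ ω, IsProbabilityMeasure (Qϑ ω)) →
          (∀ E' : Set (ℕ → 𝒜), MeasurableSet E' →
            ∀ᵐ ω ∂μ, Qϑ ω E'
              = ENNReal.ofReal (Matrix.trace ((ϑ ω)ᴴ * Qstar ω E')).re) →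
          ∀ᵐ ω ∂μ,
            Qϑ ω ((fun x (k : ℕ) => x (k + n)) ⁻¹' E)
              = ENNReal.ofReal
                  (Matrix.trace ((Phiq v θ ω n (ϑ ω))ᴴ * Qstar (θ^[n] ω) E)).re) := by
  intro E hE n
  obtain ⟨Q, hQstar⟩ : ∃ Q : Ω → VectorMeasure (ℕ → 𝒜) (Matrix (Fin d) (Fin d) ℂ),
      ∀ ω s, MeasurableSet s → Q ω s = Qstar ω s :=
    ⟨fun ω => .ofHasSum (Qstar ω) fun f hf hd =>
        Pi.hasSum.2 fun i => Pi.hasSum.2 (hQsadd ω f hf hd i),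
      fun ω _ hs => VectorMeasure.ofHasSum_apply _ hs⟩
  have hQ : ∀ᵐ ω ∂μ, ∀ N w, Q ω (cyl N w) = Tdagq v θ ω N w 1 := by
    simp only [ae_all_iff]
    intro N w
    filter_upwards [hQscyl N w] with ω hω
    rw [hQstar _ _ (measurableSet_cyl N w), hω]
  have hE' := measurable_shift_add n hE
  have hshift : ∀ᵐ ω ∂μ, Qstar ω ((fun x (k : ℕ) => x (k + n)) ⁻¹' E)
      = Phidagq v θ ω n (Qstar (θ^[n] ω) E) := by
    filter_upwards [ae_apply_preimage_shift_add hθ.quasiMeasurePreserving hQ n] with ω hω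
    rw [← hQstar _ _ hE, ← hQstar _ _ hE', hω E hE]
  refine ⟨hshift, fun ϑ _ _ Qϑ _ hQϑ => ?_⟩
  filter_upwards [hQϑ _ hE', hshift] with ω hQϑω hω
  rw [hQϑω, hω, trace_conjTranspose_mul_Phidagq]

/-- For any E ∈ Σ and n, Q*_ω(σ^{-n}(E)) = Φ^{(n)†}_ω(Q*_{θⁿ(ω)}(E)) a.s.; consequently
ℚ_{ϑ;ω}(σ^{-n}(E)) = ⟨Φ^{(n)}_ω(ϑ_ω), Q*_{θⁿ(ω)}(E)⟩ for any random state ϑ. -/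
theorem stmt19 {Ω 𝒜 : Type*} {d : ℕ} [Fintype 𝒜] [MeasurableSpace 𝒜]
    [MeasurableSingletonClass 𝒜]
    [MeasurableSpace Ω] (μ : Measure Ω) [IsProbabilityMeasure μ]
    (θ θinv : Ω → Ω) (hθ : Ergodic θ μ)
    (hinvm : Measurable θinv) (hli : Function.LeftInverse θinv θ)
    (hri : Function.RightInverse θinv θ)
    (v : Ω → 𝒜 → Matrix (Fin d) (Fin d) ℂ)
    (hvmeas : ∀ a i j, Measurable fun ω => v ω a i j)
    (hv : ∀ᵐ ω ∂μ, ∑ a, (v ω a)ᴴ * v ω a = 1)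
    -- the matrix-valued quenched quantum measure Q*
    (Qstar : Ω → Set (ℕ → 𝒜) → Matrix (Fin d) (Fin d) ℂ)
    (hQscyl : ∀ n (w : Fin n → 𝒜), ∀ᵐ ω ∂μ, Qstar ω (cyl n w) = Tdagq v θ ω n w 1)
    (hQsadd : ∀ ω (f : ℕ → Set (ℕ → 𝒜)), (∀ k, MeasurableSet (f k)) →
      Pairwise (Function.onFun Disjoint f) →
      ∀ i j, HasSum (fun k => Qstar ω (f k) i j) (Qstar ω (⋃ k, f k) i j)) :
    ∀ E : Set (ℕ → 𝒜), MeasurableSet E → ∀ n : ℕ,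
      (∀ᵐ ω ∂μ,
        Qstar ω ((fun x (k : ℕ) => x (k + n)) ⁻¹' E)
          = Phidagq v θ ω n (Qstar (θ^[n] ω) E)) ∧
      (∀ (ϑ : Ω → Matrix (Fin d) (Fin d) ℂ),
        (∀ i j, Measurable fun ω => ϑ ω i j) →
        (∀ᵐ ω ∂μ, (ϑ ω).PosSemidef ∧ (ϑ ω).trace = 1) →
        ∀ (Qϑ : Ω → Measure (ℕ → 𝒜)),
          (∀ ω, IsProbabilityMeasure (Qϑ ω)) →
          (∀ E' : Set (ℕ → 𝒜), MeasurableSet E' →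
            ∀ᵐ ω ∂μ, Qϑ ω E'
              = ENNReal.ofReal (Matrix.trace ((ϑ ω)ᴴ * Qstar ω E')).re) →
          ∀ᵐ ω ∂μ,
            Qϑ ω ((fun x (k : ℕ) => x (k + n)) ⁻¹' E)
              = ENNReal.ofReal
                  (Matrix.trace ((Phiq v θ ω n (ϑ ω))ᴴ * Qstar (θ^[n] ω) E)).re) :=
  stmt19_general μ θ hθ v Qstar hQscyl hQsadd
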